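/- Let X be a code over A such that every element of X is a palindrome, X is an infix code, and X is weakly overlap-free. Then ψ_X is conservative, i.e., ψ_X(X*) ⊆ X*. -/

import Mathlib

open List

/-- Right palindromic closure: `w⁺ = u Q u~` where `Q` is the longest palindromic
suffix of `w = uQ`; equivalently the shortest palindrome having `w` as a prefix. -/
noncomputable def palClosure {A : Type*} (w : List A) : List A :=
  letI : DecidablePred fun k => (w.drop k).reverse = w.drop k :=
    fun _ => Classical.propDecidable _
  w ++ (w.take (Nat.find (⟨w.length, by simp⟩ :
    ∃ k, (w.drop k).reverse = w.drop k))).reverse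

/-- The palindromization map `ψ_X` relative to a code `X`, evaluated on the
(unique) `X`-factorization `l = [x₁, …, xₙ]` of a word of `X*`. -/
noncomputable def psiList {A : Type*} (l : List (List A)) : List A :=
  l.foldl (fun p x => palClosure (p ++ x)) []

/-- The (usual) palindromization map `ψ` on words, letter by letter. -/
noncomputable def psiWord {A : Type*} (w : List A) : List A :=
  w.foldl (fun p a => palClosure (p ++ [a])) []

/-- `X` is a code: nonempty words with unique factorization over `X`. -/
def IsCode {A : Type*} (X : Set (List A)) : Prop :=
  (∀ x ∈ X, x ≠ []) ∧
  ∀ l l' : List (List A), (∀ w ∈ l, w ∈ X) → (∀ w ∈ l', w ∈ X) →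
    l.flatten = l'.flatten → l = l'

/-- `X` is a prefix code: nonempty words, none a proper prefix of another. -/
def IsPrefixCode {A : Type*} (X : Set (List A)) : Prop :=
  (∀ x ∈ X, x ≠ []) ∧ ∀ x ∈ X, ∀ y ∈ X, x <+: y → x = y

/-- `X` is a maximal prefix code over `A`. -/
def IsMaximalPrefixCode {A : Type*} (X : Set (List A)) : Prop :=
  IsPrefixCode X ∧ ∀ Y : Set (List A), IsPrefixCode Y → X ⊆ Y → X = Y

/-- `w ∈ X*`. -/
def InStar {A : Type*} (X : Set (List A)) (w : List A) : Prop :=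
  ∃ l : List (List A), (∀ u ∈ l, u ∈ X) ∧ l.flatten = w

/-- The finite word `w` is a prefix of the infinite word `s`. -/
def PrefixOfInf {A : Type*} (w : List A) (s : ℕ → A) : Prop :=
  ∀ i : ℕ, ∀ h : i < w.length, w.get ⟨i, h⟩ = s i

/-- The finite word `w` is a factor of the infinite word `s`. -/
def FactorOfInf {A : Type*} (w : List A) (s : ℕ → A) : Prop :=
  ∃ i : ℕ, w = List.ofFn fun k : Fin w.length => s (i + k.1)

/-- `X` has finite deciphering delay. -/
def FiniteDecipheringDelay {A : Type*} (X : Set (List A)) : Prop :=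
  ∃ k : ℕ, ∀ x ∈ X, ∀ x' ∈ X,
    (∃ (l l' : List (List A)) (r : List A),
      (∀ w ∈ l, w ∈ X) ∧ l.length = k ∧ (∀ w ∈ l', w ∈ X) ∧
      x ++ l.flatten ++ r = x' ++ l'.flatten) → x = x'

/-- The sequence `y = y₁y₂⋯ ∈ X^ω` is alternating. -/
def Alternating {A : Type*} (y : ℕ → List A) : Prop :=
  ∃ a b : A, a ≠ b ∧ ∃ (lam : List A) (idx : ℕ → ℕ), StrictMono idx ∧
    ∀ k : ℕ, (lam ++ [a]) <+: y (idx (2 * k)) ∧ (lam ++ [b]) <+: y (idx (2 * k + 1))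

/-- The infinite word `s` is ultimately periodic. -/
def UltimatelyPeriodic {A : Type*} (s : ℕ → A) : Prop :=
  ∃ p : ℕ, 0 < p ∧ ∃ N : ℕ, ∀ n ≥ N, s (n + p) = s n

/-- The infinite word `s` is uniformly recurrent: every factor occurs in every
sufficiently long factor of `s`. -/
def UniformlyRecurrent {A : Type*} (s : ℕ → A) : Prop :=
  ∀ w : List A, FactorOfInf w s →
    ∃ N : ℕ, ∀ i : ℕ, w <:+: List.ofFn fun k : Fin N => s (i + k.1)

/-- Factor complexity of the infinite word `s`. -/
noncomputable def complexity {A : Type*} (s : ℕ → A) (n : ℕ) : ℕ :=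
  {u : List A | u.length = n ∧ FactorOfInf u s}.ncard

/-- A word `w` is primitive if it is not a proper power. -/
def Primitive {A : Type*} (w : List A) : Prop :=
  ∀ (v : List A) (n : ℕ), 1 < n → w ≠ (List.replicate n v).flatten

/-! Write `p = x₁ ⋯ xₙ` for `ψ_X` of a word of `X*` and let `x ∈ X`. Since `x` is a
palindrome, the longest palindromic suffix `Q` of `p x` contains `x`, so it starts inside `p`.
If it starts at a boundary `p = x₁ ⋯ xⱼ Q'`, then `(p x)⁺ = p x xⱼ ⋯ x₁ ∈ X*`, every `xᵢ`
being a palindrome. Otherwise `Q = s xᵢ₊₁ ⋯ xₙ x` with `s` a nonempty proper suffix of `xᵢ`;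
as `Q` and `x` are palindromes, `x` is also a prefix of `Q`. Then either `x` is a proper factor
of `xᵢ`, or `x = s t` where `t` is a proper prefix of the first word of `xᵢ₊₁ ⋯ xₙ x` (an overlap),
or `x` has that first word as a proper factor: each contradicts the hypotheses on `X`. -/

namespace List

variable {α : Type*}

lemma exists_split_flatten (l : List (List α)) {k : ℕ} (hk : k ≤ l.flatten.length) :
    (∃ l₁ l₂, l = l₁ ++ l₂ ∧ l₁.flatten.length = k) ∨
      ∃ l₁ u l₂ j, l = l₁ ++ u :: l₂ ∧ l₁.flatten.length + j = k ∧ 0 < j ∧ j < u.length := by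
  induction l generalizing k with
  | nil => exact Or.inl ⟨[], [], rfl, by simp at hk ⊢; omega⟩
  | cons u l ih =>
    rcases Nat.eq_zero_or_pos k with rfl | hk₀
    · exact Or.inl ⟨[], u :: l, rfl, rfl⟩
    rcases Nat.lt_or_ge k u.length with hku | hku
    · exact Or.inr ⟨[], u, l, k, rfl, by simp, hk₀, hku⟩
    rcases ih (k := k - u.length) (by simp at hk ⊢; omega) with
      ⟨l₁, l₂, rfl, h⟩ | ⟨l₁, v, l₂, j, rfl, h, hj₀, hjv⟩
    · exact Or.inl ⟨u :: l₁, l₂, rfl, by simp at h ⊢; omega⟩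
    · exact Or.inr ⟨u :: l₁, v, l₂, j, rfl, by simp at h ⊢; omega, hj₀, hjv⟩

lemma flatten_reverse_of_forall_reverse_eq {l : List (List α)}
    (hl : ∀ w ∈ l, w.reverse = w) : l.reverse.flatten = l.flatten.reverse := by
  rw [flatten_reverse, map_congr_left hl, map_id']

end List

open List

lemma exists_palClosure_eq_append_reverse_take {α : Type*} (w : List α) :
    ∃ k, (w.drop k).reverse = w.drop k ∧
      (∀ j, (w.drop j).reverse = w.drop j → k ≤ j) ∧
      palClosure w = w ++ (w.take k).reverse := by
  classical
  have h : ∃ k, (w.drop k).reverse = w.drop k := ⟨w.length, by simp⟩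
  refine ⟨Nat.find h, Nat.find_spec h, fun j hj => Nat.find_min' h hj, ?_⟩
  unfold palClosure
  congr

def InfixFree {A : Type*} (X : Set (List A)) : Prop :=
  ∀ x ∈ X, ∀ y ∈ X, x <:+: y → x = y

def WeaklyOverlapFree {A : Type*} (X : Set (List A)) : Prop :=
  ∀ x ∈ X, ∀ sfx pfx : List A, x = sfx ++ pfx →
    (∃ x' ∈ X, sfx <:+ x' ∧ sfx ≠ x' ∧ sfx ≠ []) →
    (∃ x'' ∈ X, pfx <+: x'' ∧ pfx ≠ x'' ∧ pfx ≠ []) → False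

section Conservative

variable {A : Type*} {X : Set (List A)}

lemma not_prefix_append_of_properSuffix (hinfix : InfixFree X) (hwof : WeaklyOverlapFree X)
    {u x y s R : List A} (hu : u ∈ X) (hx : x ∈ X) (hy : y ∈ X)
    (hsu : s <:+ u) (hs : s ≠ []) (hsu' : s.length < u.length)
    (hxR : x <+: s ++ R) (hyR : y <+: R) : False := by
  rcases le_or_gt x.length s.length with hxs | hsx
  · have hxs' : x <+: s := prefix_of_prefix_length_le hxR (prefix_append s R) hxs
    have := congrArg length (hinfix x hx u hu (hxs'.isInfix.trans hsu.isInfix))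
    omega
  obtain ⟨t, rfl⟩ : s <+: x := prefix_of_prefix_length_le (prefix_append s R) hxR hsx.le
  have htR : t <+: R := (prefix_append_right_inj s).1 hxR
  have hs₀ : 0 < s.length := length_pos_iff.2 hs
  rcases lt_or_ge t.length y.length with hty | hyt
  · refine hwof _ hx s t rfl ⟨u, hu, hsu, fun h => by simp [h] at hsu', hs⟩
      ⟨y, hy, prefix_of_prefix_length_le htR hyR hty.le, fun h => by simp [h] at hty, ?_⟩
    rintro rfl
    simp at hsx
  · have hyt' : y <+: t := prefix_of_prefix_length_le hyR htR hyt
    have := congrArg length (hinfix y hy _ hx (hyt'.isInfix.trans (suffix_append s t).isInfix))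
    simp only [length_append] at this
    omega

lemma palClosure_append_mem_star (hpal : ∀ x ∈ X, x.reverse = x) (hinfix : InfixFree X)
    (hwof : WeaklyOverlapFree X) {m : List (List A)} (hm : ∀ w ∈ m, w ∈ X)
    {x : List A} (hx : x ∈ X) : InStar X (palClosure (m.flatten ++ x)) := by
  obtain ⟨k, hQ, hk_min, hclosure⟩ := exists_palClosure_eq_append_reverse_take (m.flatten ++ x)
  have hk : k ≤ m.flatten.length := hk_min _ (by rw [drop_left]; exact hpal x hx)
  rcases exists_split_flatten m hk with ⟨l₁, l₂, rfl, rfl⟩ | ⟨l₁, u, l₂, j, rfl, rfl, hj₀, hju⟩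
  · have hl₁ : ∀ w ∈ l₁, w ∈ X := fun w hw => hm w (mem_append_left _ hw)
    refine ⟨l₁ ++ l₂ ++ [x] ++ l₁.reverse, ?_, ?_⟩
    · intro w hw
      simp only [mem_append, mem_reverse, mem_singleton] at hw
      rcases hw with ((hw | hw) | rfl) | hw
      · exact hl₁ w hw
      · exact hm w (mem_append_right _ hw)
      · exact hx
      · exact hl₁ w hw
    · have htake : ((l₁ ++ l₂).flatten ++ x).take l₁.flatten.length = l₁.flatten := by simp
      rw [hclosure, htake, ← flatten_reverse_of_forall_reverse_eq fun w hw => hpal w (hl₁ w hw)]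
      simp
  · exfalso
    have hu : u ∈ X := hm u (by simp)
    have hl₂ : ∀ w ∈ l₂, w ∈ X := fun w hw => hm w (by simp [hw])
    set R := l₂.flatten ++ x
    have hdrop : (flatten (l₁ ++ u :: l₂) ++ x).drop (l₁.flatten.length + j) = u.drop j ++ R := by
      simp only [flatten_append, flatten_cons, append_assoc, R]
      rw [drop_length_add_append, drop_append_of_le_length hju.le]
    rw [hdrop] at hQ
    have hxR : x <+: u.drop j ++ R := by
      rw [← hQ, ← hpal x hx]
      exact reverse_prefix.2 (suffix_append_of_suffix (suffix_append l₂.flatten x))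
    obtain ⟨y, hy, hyR⟩ : ∃ y ∈ X, y <+: R := by
      rcases l₂ with _ | ⟨v, l₂⟩
      · exact ⟨x, hx, by simp [R]⟩
      · exact ⟨v, hl₂ v (by simp), by simp [R]⟩
    exact not_prefix_append_of_properSuffix hinfix hwof hu hx hy (drop_suffix j u)
      (by simpa using hju) (by simp; omega) hxR hyR

lemma psiList_append_singleton (l : List (List A)) (x : List A) :
    psiList (l ++ [x]) = palClosure (psiList l ++ x) := by
  simp [psiList, foldl_append]

end Conservative

theorem stmt16_general {A : Type*} (X : Set (List A))
    (hpal : ∀ x ∈ X, x.reverse = x)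
    (hinfix : ∀ x ∈ X, ∀ y ∈ X, x <:+: y → x = y)
    (hwof : ∀ x ∈ X, ∀ sfx pfx : List A, x = sfx ++ pfx →
      (∃ x' ∈ X, sfx <:+ x' ∧ sfx ≠ x' ∧ sfx ≠ []) →
      (∃ x'' ∈ X, pfx <+: x'' ∧ pfx ≠ x'' ∧ pfx ≠ []) → False) :
    ∀ l : List (List A), (∀ w ∈ l, w ∈ X) → InStar X (psiList l) := by
  intro l
  induction l using List.reverseRecOn with
  | nil => exact fun _ => ⟨[], by simp, rfl⟩
  | append_singleton l x ih =>
    intro hl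
    obtain ⟨m, hm, hmp⟩ := ih fun w hw => hl w (mem_append_left _ hw)
    rw [psiList_append_singleton, ← hmp]
    exact palClosure_append_mem_star hpal hinfix hwof hm (hl x (by simp))

/-- If `X ⊆ PAL` is an infix, weakly overlap-free code,
then `ψ_X` is conservative: `ψ_X(X*) ⊆ X*`. -/
theorem stmt16 {A : Type*} [Fintype A] (X : Set (List A)) (hX : IsCode X)
    (hpal : ∀ x ∈ X, x.reverse = x)
    (hinfix : ∀ x ∈ X, ∀ y ∈ X, x <:+: y → x = y)
    (hwof : ∀ x ∈ X, ∀ sfx pfx : List A, x = sfx ++ pfx →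
      (∃ x' ∈ X, sfx <:+ x' ∧ sfx ≠ x' ∧ sfx ≠ []) →
      (∃ x'' ∈ X, pfx <+: x'' ∧ pfx ≠ x'' ∧ pfx ≠ []) → False) :
    ∀ l : List (List A), (∀ w ∈ l, w ∈ X) → InStar X (psiList l) :=
  stmt16_general X hpal hinfix hwof
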